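/- Generalized admissibility of multiple simultaneous replacement in G3c₁^=⁻: let A be an atomic formula, let u₁, …, uₙ, v be pairwise distinct variables each occurring exactly once in A, let q₁, …, qₙ, p₁, …, pₙ, s, r be terms in which none of the variables u₁, …, uₙ, v occurs, and let Γ, Δ be finite multisets of formulas. If the sequent q₁ = p₁, …, qₙ = pₙ, s = r, A[u⃗/q⃗, v/s], A[u⃗/p⃗, v/r], Γ ⇒ Δ is derivable in G3c₁^=⁻, then the sequent q₁ = p₁, …, qₙ = pₙ, s = r, A[u⃗/q⃗, v/s], Γ ⇒ Δ is derivable in G3c₁^=⁻. -/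

import Mathlib

open FirstOrder Language Multiset

universe u v

variable {L : FirstOrder.Language.{u, v}}

/-- Number of occurrences of the variable `v` in a term. -/
def tCount (v : ℕ) : L.Term ℕ → ℕ
  | .var w => if w = v then 1 else 0
  | .func _ ts => Finset.univ.sum fun i => tCount v (ts i)

/-- First-order formulas over the language `L` (with built-in equality),
with natural numbers as variables. -/
inductive Fm (L : FirstOrder.Language.{u, v}) : Type (max u v) where
  | falsum : Fm L
  | equal : L.Term ℕ → L.Term ℕ → Fm L
  | rel {l : ℕ} : L.Relations l → (Fin l → L.Term ℕ) → Fm L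
  | and : Fm L → Fm L → Fm L
  | or : Fm L → Fm L → Fm L
  | imp : Fm L → Fm L → Fm L
  | all : ℕ → Fm L → Fm L
  | ex : ℕ → Fm L → Fm L

namespace Fm

/-- Atomic formulas: equalities and relational atoms. -/
inductive IsAtomic : Fm L → Prop where
  | equal (t₁ t₂ : L.Term ℕ) : (Fm.equal t₁ t₂).IsAtomic
  | rel {l : ℕ} (R : L.Relations l) (ts : Fin l → L.Term ℕ) : (Fm.rel R ts).IsAtomic

/-- Number of free occurrences of the variable `v` in a formula. -/
def fCount (v : ℕ) : Fm L → ℕ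
  | falsum => 0
  | equal t₁ t₂ => tCount v t₁ + tCount v t₂
  | rel _ ts => Finset.univ.sum fun i => tCount v (ts i)
  | and A B => fCount v A + fCount v B
  | or A B => fCount v A + fCount v B
  | imp A B => fCount v A + fCount v B
  | all y A => if y = v then 0 else fCount v A
  | ex y A => if y = v then 0 else fCount v A

/-- The set of free variables of a formula. -/
def freeVars : Fm L → Set ℕ
  | falsum => ∅
  | equal t₁ t₂ => {w | tCount w t₁ ≠ 0 ∨ tCount w t₂ ≠ 0}
  | rel _ ts => {w | ∃ i, tCount w (ts i) ≠ 0}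
  | and A B => A.freeVars ∪ B.freeVars
  | or A B => A.freeVars ∪ B.freeVars
  | imp A B => A.freeVars ∪ B.freeVars
  | all y A => A.freeVars \ {y}
  | ex y A => A.freeVars \ {y}

/-- Simultaneous substitution of terms for the free variables of a formula. -/
def ssub (σ : ℕ → L.Term ℕ) : Fm L → Fm L
  | falsum => falsum
  | equal t₁ t₂ => equal (t₁.subst σ) (t₂.subst σ)
  | rel R ts => rel R fun i => (ts i).subst σ
  | and A B => and (A.ssub σ) (B.ssub σ)
  | or A B => or (A.ssub σ) (B.ssub σ)
  | imp A B => imp (A.ssub σ) (B.ssub σ)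
  | all y A => all y (A.ssub (Function.update σ y (Term.var y)))
  | ex y A => ex y (A.ssub (Function.update σ y (Term.var y)))

/-- `A.subst v t` is `A[v/t]`, the substitution of the term `t`
for the variable `v` in `A`. -/
def subst (v : ℕ) (t : L.Term ℕ) (A : Fm L) : Fm L :=
  A.ssub (Function.update (Term.var : ℕ → L.Term ℕ) v t)

/-- `t` is free for `x` in `A` (no free occurrence of `x` lies in the scope of a
quantifier binding a variable of `t`). -/
def freeFor (t : L.Term ℕ) (x : ℕ) : Fm L → Prop
  | falsum => True
  | equal _ _ => True
  | rel _ _ => True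
  | and A B => freeFor t x A ∧ freeFor t x B
  | or A B => freeFor t x A ∧ freeFor t x B
  | imp A B => freeFor t x A ∧ freeFor t x B
  | all y A => x = y ∨ x ∉ A.freeVars ∨ (tCount y t = 0 ∧ freeFor t x A)
  | ex y A => x = y ∨ x ∉ A.freeVars ∨ (tCount y t = 0 ∧ freeFor t x A)

end Fm

/-- The rule Repl, given as the relation between the antecedent of the premiss and the
antecedent of the conclusion (the succedent is unchanged): from
`s = r, P[v/s], P[v/r], Γ ⇒ Δ` infer `s = r, P[v/s], Γ ⇒ Δ`, for `P` atomic and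
`v` not occurring in `s, r`. -/
def ReplFull (L : FirstOrder.Language.{u, v}) : Multiset (Fm L) → Multiset (Fm L) → Prop := fun Γp Γc =>
  ∃ (s r : L.Term ℕ) (v : ℕ) (P : Fm L) (Γ : Multiset (Fm L)),
    P.IsAtomic ∧ tCount v s = 0 ∧ tCount v r = 0 ∧
    Γp = Fm.equal s r ::ₘ P.subst v s ::ₘ P.subst v r ::ₘ Γ ∧
    Γc = Fm.equal s r ::ₘ P.subst v s ::ₘ Γ

/-- The rule Repl⁻: from `s = r, P[v/r], Γ ⇒ Δ` infer `s = r, P[v/s], Γ ⇒ Δ`,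
for `P` atomic and `v` not occurring in `s, r`. -/
def ReplMinus (L : FirstOrder.Language.{u, v}) : Multiset (Fm L) → Multiset (Fm L) → Prop := fun Γp Γc =>
  ∃ (s r : L.Term ℕ) (v : ℕ) (P : Fm L) (Γ : Multiset (Fm L)),
    P.IsAtomic ∧ tCount v s = 0 ∧ tCount v r = 0 ∧
    Γp = Fm.equal s r ::ₘ P.subst v r ::ₘ Γ ∧
    Γc = Fm.equal s r ::ₘ P.subst v s ::ₘ Γ

/-- The rule Repl₁⁻: Repl⁻ restricted to atomic `P` with exactly one occurrence of `v`. -/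
def ReplMinus1 (L : FirstOrder.Language.{u, v}) : Multiset (Fm L) → Multiset (Fm L) → Prop := fun Γp Γc =>
  ∃ (s r : L.Term ℕ) (v : ℕ) (P : Fm L) (Γ : Multiset (Fm L)),
    P.IsAtomic ∧ tCount v s = 0 ∧ tCount v r = 0 ∧ Fm.fCount v P = 1 ∧
    Γp = Fm.equal s r ::ₘ P.subst v r ::ₘ Γ ∧
    Γc = Fm.equal s r ::ₘ P.subst v s ::ₘ Γ

/-- `DerC rp n Γ Δ`: the sequent `Γ ⇒ Δ` has a derivation of height at most `n` in the
classical multisuccedent G3 calculus `G3c` with the equality rule Ref and the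
replacement rule given by `rp` (e.g. `ReplFull L` for `G3c^=`, `ReplMinus L` for `G3c^=⁻`,
`ReplMinus1 L` for `G3c₁^=⁻`). -/
inductive DerC (rp : Multiset (Fm L) → Multiset (Fm L) → Prop) :
    ℕ → Multiset (Fm L) → Multiset (Fm L) → Prop where
  | ax {n : ℕ} {Γ Δ : Multiset (Fm L)} {P : Fm L} (hP : P.IsAtomic) :
      DerC rp n (P ::ₘ Γ) (P ::ₘ Δ)
  | botL {n : ℕ} {Γ Δ : Multiset (Fm L)} : DerC rp n (Fm.falsum ::ₘ Γ) Δ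
  | andL {n : ℕ} {Γ Δ : Multiset (Fm L)} {A B : Fm L} :
      DerC rp n (A ::ₘ B ::ₘ Γ) Δ → DerC rp (n + 1) (Fm.and A B ::ₘ Γ) Δ
  | andR {n : ℕ} {Γ Δ : Multiset (Fm L)} {A B : Fm L} :
      DerC rp n Γ (A ::ₘ Δ) → DerC rp n Γ (B ::ₘ Δ) → DerC rp (n + 1) Γ (Fm.and A B ::ₘ Δ)
  | orL {n : ℕ} {Γ Δ : Multiset (Fm L)} {A B : Fm L} :
      DerC rp n (A ::ₘ Γ) Δ → DerC rp n (B ::ₘ Γ) Δ → DerC rp (n + 1) (Fm.or A B ::ₘ Γ) Δ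
  | orR {n : ℕ} {Γ Δ : Multiset (Fm L)} {A B : Fm L} :
      DerC rp n Γ (A ::ₘ B ::ₘ Δ) → DerC rp (n + 1) Γ (Fm.or A B ::ₘ Δ)
  | impL {n : ℕ} {Γ Δ : Multiset (Fm L)} {A B : Fm L} :
      DerC rp n Γ (A ::ₘ Δ) → DerC rp n (B ::ₘ Γ) Δ → DerC rp (n + 1) (Fm.imp A B ::ₘ Γ) Δ
  | impR {n : ℕ} {Γ Δ : Multiset (Fm L)} {A B : Fm L} :
      DerC rp n (A ::ₘ Γ) (B ::ₘ Δ) → DerC rp (n + 1) Γ (Fm.imp A B ::ₘ Δ)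
  | allL {n : ℕ} {Γ Δ : Multiset (Fm L)} {x : ℕ} {t : L.Term ℕ} {A : Fm L}
      (hf : Fm.freeFor t x A) :
      DerC rp n (A.subst x t ::ₘ Fm.all x A ::ₘ Γ) Δ → DerC rp (n + 1) (Fm.all x A ::ₘ Γ) Δ
  | allR {n : ℕ} {Γ Δ : Multiset (Fm L)} {x y : ℕ} {A : Fm L}
      (hf : Fm.freeFor (Term.var y) x A) (hy : y ∉ (Fm.all x A).freeVars)
      (hΓ : ∀ C ∈ Γ, y ∉ Fm.freeVars C) (hΔ : ∀ C ∈ Δ, y ∉ Fm.freeVars C) :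
      DerC rp n Γ (A.subst x (Term.var y) ::ₘ Δ) → DerC rp (n + 1) Γ (Fm.all x A ::ₘ Δ)
  | exL {n : ℕ} {Γ Δ : Multiset (Fm L)} {x y : ℕ} {A : Fm L}
      (hf : Fm.freeFor (Term.var y) x A) (hy : y ∉ (Fm.ex x A).freeVars)
      (hΓ : ∀ C ∈ Γ, y ∉ Fm.freeVars C) (hΔ : ∀ C ∈ Δ, y ∉ Fm.freeVars C) :
      DerC rp n (A.subst x (Term.var y) ::ₘ Γ) Δ → DerC rp (n + 1) (Fm.ex x A ::ₘ Γ) Δ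
  | exR {n : ℕ} {Γ Δ : Multiset (Fm L)} {x : ℕ} {t : L.Term ℕ} {A : Fm L}
      (hf : Fm.freeFor t x A) :
      DerC rp n Γ (A.subst x t ::ₘ Fm.ex x A ::ₘ Δ) → DerC rp (n + 1) Γ (Fm.ex x A ::ₘ Δ)
  | ref {n : ℕ} {Γ Δ : Multiset (Fm L)} (t : L.Term ℕ) :
      DerC rp n (Fm.equal t t ::ₘ Γ) Δ → DerC rp (n + 1) Γ Δ
  | repl {n : ℕ} {Γp Γc Δ : Multiset (Fm L)} (h : rp Γp Γc) :
      DerC rp n Γp Δ → DerC rp (n + 1) Γc Δ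

/-- `DerI rp n Γ Δ`: the sequent `Γ ⇒ Δ` has a derivation of height at most `n` in the
intuitionistic multisuccedent G3 calculus (the right rules for `→` and `∀` have
single-succedent premisses, and L→ repeats its principal formula) with the equality rule
Ref and the replacement rule given by `rp`. -/
inductive DerI (rp : Multiset (Fm L) → Multiset (Fm L) → Prop) :
    ℕ → Multiset (Fm L) → Multiset (Fm L) → Prop where
  | ax {n : ℕ} {Γ Δ : Multiset (Fm L)} {P : Fm L} (hP : P.IsAtomic) :
      DerI rp n (P ::ₘ Γ) (P ::ₘ Δ)
  | botL {n : ℕ} {Γ Δ : Multiset (Fm L)} : DerI rp n (Fm.falsum ::ₘ Γ) Δ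
  | andL {n : ℕ} {Γ Δ : Multiset (Fm L)} {A B : Fm L} :
      DerI rp n (A ::ₘ B ::ₘ Γ) Δ → DerI rp (n + 1) (Fm.and A B ::ₘ Γ) Δ
  | andR {n : ℕ} {Γ Δ : Multiset (Fm L)} {A B : Fm L} :
      DerI rp n Γ (A ::ₘ Δ) → DerI rp n Γ (B ::ₘ Δ) → DerI rp (n + 1) Γ (Fm.and A B ::ₘ Δ)
  | orL {n : ℕ} {Γ Δ : Multiset (Fm L)} {A B : Fm L} :
      DerI rp n (A ::ₘ Γ) Δ → DerI rp n (B ::ₘ Γ) Δ → DerI rp (n + 1) (Fm.or A B ::ₘ Γ) Δ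
  | orR {n : ℕ} {Γ Δ : Multiset (Fm L)} {A B : Fm L} :
      DerI rp n Γ (A ::ₘ B ::ₘ Δ) → DerI rp (n + 1) Γ (Fm.or A B ::ₘ Δ)
  | impL {n : ℕ} {Γ Δ : Multiset (Fm L)} {A B : Fm L} :
      DerI rp n (Fm.imp A B ::ₘ Γ) (A ::ₘ Δ) → DerI rp n (B ::ₘ Γ) Δ →
      DerI rp (n + 1) (Fm.imp A B ::ₘ Γ) Δ
  | impR {n : ℕ} {Γ Δ : Multiset (Fm L)} {A B : Fm L} :
      DerI rp n (A ::ₘ Γ) {B} → DerI rp (n + 1) Γ (Fm.imp A B ::ₘ Δ)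
  | allL {n : ℕ} {Γ Δ : Multiset (Fm L)} {x : ℕ} {t : L.Term ℕ} {A : Fm L}
      (hf : Fm.freeFor t x A) :
      DerI rp n (A.subst x t ::ₘ Fm.all x A ::ₘ Γ) Δ → DerI rp (n + 1) (Fm.all x A ::ₘ Γ) Δ
  | allR {n : ℕ} {Γ Δ : Multiset (Fm L)} {x y : ℕ} {A : Fm L}
      (hf : Fm.freeFor (Term.var y) x A) (hy : y ∉ (Fm.all x A).freeVars)
      (hΓ : ∀ C ∈ Γ, y ∉ Fm.freeVars C) :
      DerI rp n Γ {A.subst x (Term.var y)} → DerI rp (n + 1) Γ (Fm.all x A ::ₘ Δ)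
  | exL {n : ℕ} {Γ Δ : Multiset (Fm L)} {x y : ℕ} {A : Fm L}
      (hf : Fm.freeFor (Term.var y) x A) (hy : y ∉ (Fm.ex x A).freeVars)
      (hΓ : ∀ C ∈ Γ, y ∉ Fm.freeVars C) (hΔ : ∀ C ∈ Δ, y ∉ Fm.freeVars C) :
      DerI rp n (A.subst x (Term.var y) ::ₘ Γ) Δ → DerI rp (n + 1) (Fm.ex x A ::ₘ Γ) Δ
  | exR {n : ℕ} {Γ Δ : Multiset (Fm L)} {x : ℕ} {t : L.Term ℕ} {A : Fm L}
      (hf : Fm.freeFor t x A) :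
      DerI rp n Γ (A.subst x t ::ₘ Fm.ex x A ::ₘ Δ) → DerI rp (n + 1) Γ (Fm.ex x A ::ₘ Δ)
  | ref {n : ℕ} {Γ Δ : Multiset (Fm L)} (t : L.Term ℕ) :
      DerI rp n (Fm.equal t t ::ₘ Γ) Δ → DerI rp (n + 1) Γ Δ
  | repl {n : ℕ} {Γp Γc Δ : Multiset (Fm L)} (h : rp Γp Γc) :
      DerI rp n Γp Δ → DerI rp (n + 1) Γc Δ

/-!
The shorter antecedent `Θ = q⃗ = p⃗, s = r, A[u⃗/q⃗, v/s], Γ` *simulates* the longer one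
`Λ = Θ, A[u⃗/p⃗, v/r]`: its formulas correspond one-to-one to part of `Λ` up to congruence of
atoms modulo the equations of `Θ`, and the remaining formulas of `Λ` (here `A[u⃗/p⃗, v/r]`) are
atoms entailed by `Θ`. By induction on derivations, `Λ ⇒ Δ` derivable and `Θ` simulating `Λ`
give `Θ ⇒ Δ` derivable. Every logical rule and Ref preserve simulation, and Repl⁻ only turns an
atom into a congruent one. At an axiom the principal atom is entailed by `Θ`, and it is
recovered by Ref and Repl₁⁻ steps that rewrite one occurrence at a time, marked by a fresh
variable.
-/

open Function Filter

theorem rel_of_update_steps {ι α : Type*} [Fintype ι] [DecidableEq ι]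
    {r : (ι → α) → (ι → α) → Prop} (hrefl : ∀ x, r x x)
    (htrans : ∀ {x y z}, r x y → r y z → r x z) {f g : ι → α}
    (hstep : ∀ x i, x i = f i → r x (update x i (g i))) : r f g := by
  suffices h : ∀ s : Finset ι, r f (s.piecewise g f) by simpa using h Finset.univ
  intro s
  induction s using Finset.induction_on with
  | empty => simpa using hrefl f
  | insert a s ha ih =>
      rw [Finset.piecewise_insert]
      exact htrans ih (hstep _ a (Finset.piecewise_eq_of_notMem _ _ _ ha))

theorem Multiset.cons_eq_add_cases {α : Type*} {a : α} {s t u : Multiset α}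
    (h : a ::ₘ s = t + u) :
    (∃ t', t = a ::ₘ t' ∧ s = t' + u) ∨ ∃ u', u = a ::ₘ u' ∧ s = t + u' := by
  rcases mem_add.mp (h ▸ mem_cons_self a s) with hm | hm
  · obtain ⟨t', rfl⟩ := exists_cons_of_mem hm
    exact .inl ⟨t', rfl, (cons_inj_right a).mp (h.trans (cons_add _ _ _))⟩
  · obtain ⟨u', rfl⟩ := exists_cons_of_mem hm
    exact .inr ⟨u', rfl, (cons_inj_right a).mp (h.trans (add_cons _ _ _))⟩

theorem tCount_var_self (w : ℕ) : tCount w (Term.var w : L.Term ℕ) = 1 := by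
  simp [tCount]

theorem tCount_var_of_ne {z w : ℕ} (h : z ≠ w) : tCount w (Term.var z : L.Term ℕ) = 0 := by
  simp [tCount, h]

theorem tCount_func_eq_zero {l : ℕ} {f : L.Functions l} {ts : Fin l → L.Term ℕ} {w : ℕ} :
    tCount w (Term.func f ts) = 0 ↔ ∀ i, tCount w (ts i) = 0 := by
  simp [tCount, Finset.sum_eq_zero_iff]

theorem tCount_eventually_eq_zero (t : L.Term ℕ) : ∀ᶠ w in atTop, tCount w t = 0 := by
  induction t with
  | var z => exact (eventually_gt_atTop z).mono fun w hw => tCount_var_of_ne hw.ne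
  | func f ts ih => exact (eventually_all.2 ih).mono fun w hw => tCount_func_eq_zero.2 hw

namespace FirstOrder.Language.Term

theorem subst_congr {t : L.Term ℕ} {σ σ' : ℕ → L.Term ℕ}
    (h : ∀ z, tCount z t ≠ 0 → σ z = σ' z) : t.subst σ = t.subst σ' := by
  induction t with
  | var z => exact h z (by simp [tCount])
  | func f ts ih =>
      exact congrArg (func f) <| funext fun i => ih i fun z hz =>
        h z fun h0 => hz (tCount_func_eq_zero.1 h0 i)

theorem subst_var_eq_self (t : L.Term ℕ) : t.subst Term.var = t := by
  induction t with
  | var z => rfl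
  | func f ts ih => exact congrArg (func f) (funext ih)

theorem subst_subst (t : L.Term ℕ) (σ σ' : ℕ → L.Term ℕ) :
    (t.subst σ).subst σ' = t.subst fun z => (σ z).subst σ' := by
  induction t with
  | var z => rfl
  | func f ts ih => exact congrArg (func f) (funext ih)

theorem subst_update_of_tCount_eq_zero {t : L.Term ℕ} {w : ℕ} (h : tCount w t = 0)
    (x : L.Term ℕ) : t.subst (update var w x) = t := by
  conv_rhs => rw [← t.subst_var_eq_self]
  refine subst_congr fun z hz => update_of_ne ?_ _ _
  rintro rfl
  exact hz h

theorem subst_update_var_subst {t : L.Term ℕ} {w w' : ℕ} (ht : tCount w' t = 0)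
    (c z : L.Term ℕ) :
    (t.subst (update var w c)).subst (update var w' z) =
      t.subst (update var w (c.subst (update var w' z))) := by
  rw [subst_subst]
  refine subst_congr fun z' hz' => ?_
  rcases eq_or_ne z' w with rfl | hne
  · simp
  · have : z' ≠ w' := by rintro rfl; exact hz' ht
    simp [hne, this]

end FirstOrder.Language.Term

theorem tCount_subst_update {y w : ℕ} (hyw : y ≠ w) (x t : L.Term ℕ) :
    tCount y (t.subst (update Term.var w x)) = tCount y t + tCount w t * tCount y x := by
  induction t with
  | var z =>
      rcases eq_or_ne z w with rfl | hz
      · simp [tCount, hyw.symm]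
      · simp [Term.subst, tCount, hz]
  | func f ts ih =>
      simp only [Term.subst, tCount]
      rw [Finset.sum_congr rfl fun i _ => ih i, Finset.sum_add_distrib, Finset.sum_mul]

theorem tCount_subst_update_ne_zero {y w : ℕ} {s : L.Term ℕ} (r : L.Term ℕ) {t : L.Term ℕ}
    (h : tCount y (t.subst (update Term.var w s)) ≠ 0) :
    tCount y (t.subst (update Term.var w r)) ≠ 0 ∨ tCount y s ≠ 0 := by
  induction t with
  | var z =>
      rcases eq_or_ne z w with rfl | hz <;> simp_all
  | func f ts ih =>
      obtain ⟨i, hi⟩ := not_forall.1 (mt tCount_func_eq_zero.2 h)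
      exact (ih i hi).imp_left fun h' h0 => h' (tCount_func_eq_zero.1 h0 i)

section MarkedVector

variable {l : ℕ} {x : Fin l → L.Term ℕ} {w : ℕ}

theorem sum_tCount_update_var (hx : ∀ j, tCount w (x j) = 0) (i : Fin l) :
    ∑ j, tCount w (update x i (Term.var w) j) = 1 := by
  rw [Finset.sum_eq_single i (fun j _ hj => by rw [update_of_ne hj, hx]) (by simp)]
  simp [tCount_var_self]

theorem subst_update_var_vector (hx : ∀ j, tCount w (x j) = 0) (i : Fin l) (t : L.Term ℕ) :
    (fun j => (update x i (Term.var w) j).subst (update Term.var w t)) = update x i t := by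
  funext j
  rcases eq_or_ne j i with rfl | hj
  · simp
  · simp [hj, Term.subst_update_of_tCount_eq_zero (hx j)]

end MarkedVector

namespace Fm

theorem fCount_eventually_eq_zero (P : Fm L) : ∀ᶠ w in atTop, fCount w P = 0 := by
  induction P with
  | falsum => exact Eventually.of_forall fun _ => rfl
  | equal t₁ t₂ =>
      exact ((tCount_eventually_eq_zero t₁).and (tCount_eventually_eq_zero t₂)).mono
        fun w h => by simp [fCount, h.1, h.2]
  | rel R ts =>
      exact (eventually_all.2 fun i => tCount_eventually_eq_zero (ts i)).mono
        fun w h => by simp [fCount, h]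
  | and A B ihA ihB | or A B ihA ihB | imp A B ihA ihB =>
      exact (ihA.and ihB).mono fun w h => by simp [fCount, h.1, h.2]
  | all y A ih | ex y A ih => exact ih.mono fun w h => by simp [fCount, h]

@[simp]
theorem subst_equal (t₁ t₂ : L.Term ℕ) (w : ℕ) (x : L.Term ℕ) :
    (equal t₁ t₂).subst w x =
      equal (t₁.subst (update Term.var w x)) (t₂.subst (update Term.var w x)) :=
  rfl

@[simp]
theorem subst_rel {l : ℕ} (R : L.Relations l) (ts : Fin l → L.Term ℕ) (w : ℕ) (x : L.Term ℕ) :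
    (rel R ts).subst w x = rel R fun i => (ts i).subst (update Term.var w x) :=
  rfl

theorem exists_marker_equal_left (c : L.Term ℕ) :
    ∃ w, fCount w (equal (Term.var w) c) = 1 ∧
      ∀ t, (equal (Term.var w) c).subst w t = equal t c := by
  obtain ⟨w, hw⟩ := (tCount_eventually_eq_zero c).exists
  exact ⟨w, by simp [fCount, tCount_var_self, hw],
    fun t => by simp [Term.subst_update_of_tCount_eq_zero hw]⟩

theorem exists_marker_equal_right (c : L.Term ℕ) :
    ∃ w, fCount w (equal c (Term.var w)) = 1 ∧
      ∀ t, (equal c (Term.var w)).subst w t = equal c t := by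
  obtain ⟨w, hw⟩ := (tCount_eventually_eq_zero c).exists
  exact ⟨w, by simp [fCount, tCount_var_self, hw],
    fun t => by simp [Term.subst_update_of_tCount_eq_zero hw]⟩

namespace IsAtomic

variable {P : Fm L}

theorem subst (hP : P.IsAtomic) (w : ℕ) (x : L.Term ℕ) : (P.subst w x).IsAtomic := by
  cases hP
  exacts [.equal _ _, .rel _ _]

theorem fCount_subst_update (hP : P.IsAtomic) {y w : ℕ} (hyw : y ≠ w) (x : L.Term ℕ) :
    fCount y (P.subst w x) = fCount y P + fCount w P * tCount y x := by
  cases hP with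
  | equal t₁ t₂ =>
      simp only [subst_equal, fCount, tCount_subst_update hyw]
      ring
  | rel R ts =>
      simp only [subst_rel, fCount, tCount_subst_update hyw, Finset.sum_add_distrib,
        Finset.sum_mul]

theorem subst_subst (hP : P.IsAtomic) {w' : ℕ} (hw' : fCount w' P = 0) (w : ℕ)
    (c z : L.Term ℕ) :
    (P.subst w c).subst w' z = P.subst w (c.subst (update Term.var w' z)) := by
  cases hP with
  | equal t₁ t₂ =>
      simp only [fCount, Nat.add_eq_zero_iff] at hw'
      simp [Term.subst_update_var_subst hw'.1, Term.subst_update_var_subst hw'.2]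
  | rel R ts =>
      simp only [fCount, Finset.sum_eq_zero_iff, Finset.mem_univ, true_implies] at hw'
      simp [Term.subst_update_var_subst (hw' _)]

theorem mem_freeVars_subst (hP : P.IsAtomic) {y w : ℕ} {s : L.Term ℕ} (r : L.Term ℕ)
    (hy : y ∈ (P.subst w s).freeVars) :
    y ∈ (P.subst w r).freeVars ∨ y ∈ (Fm.equal s r).freeVars := by
  have hsr : tCount y s ≠ 0 → y ∈ (Fm.equal s r).freeVars := Or.inl
  cases hP with
  | equal t₁ t₂ =>
      simp only [subst_equal, freeVars, Set.mem_ofPred_eq] at hy ⊢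
      rcases hy with h | h
      · exact (tCount_subst_update_ne_zero r h).imp Or.inl hsr
      · exact (tCount_subst_update_ne_zero r h).imp Or.inr hsr
  | rel R ts =>
      simp only [subst_rel, freeVars, Set.mem_ofPred_eq] at hy ⊢
      obtain ⟨i, h⟩ := hy
      exact (tCount_subst_update_ne_zero r h).imp (⟨i, ·⟩) hsr

/-- `P[w/c[w₀/·]]` is again an atomic context with a single marked hole. -/
theorem exists_marker_subst {P : Fm L} (hP : P.IsAtomic) {w w₀ : ℕ}
    (hw : fCount w P = 1) {c : L.Term ℕ} (hc : tCount w₀ c = 1) {p : ℕ → Prop}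
    (hp : ∀ᶠ w' in atTop, p w') :
    ∃ Q w', p w' ∧ Q.IsAtomic ∧ fCount w' Q = 1 ∧
      ∀ t, Q.subst w' t = P.subst w (c.subst (update Term.var w₀ t)) := by
  obtain ⟨w', hpw', hPw', hcw'⟩ :=
    (hp.and ((fCount_eventually_eq_zero P).and (tCount_eventually_eq_zero c))).exists
  have hw'w : w' ≠ w := by rintro rfl; omega
  have hw'w₀ : w' ≠ w₀ := by rintro rfl; omega
  refine ⟨P.subst w (c.subst (update Term.var w₀ (Term.var w'))), w', hpw', hP.subst _ _, ?_,
    fun t => ?_⟩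
  · rw [hP.fCount_subst_update hw'w, tCount_subst_update hw'w₀, hPw', hw, hcw', hc,
      tCount_var_self]
  · rw [hP.subst_subst hPw', Term.subst_update_var_subst hcw']
    simp

end IsAtomic

end Fm

/-- Congruence is closed one occurrence at a time: that is what one application of Repl₁⁻
rewrites. -/
inductive TermCong (E : Multiset (Fm L)) : L.Term ℕ → L.Term ℕ → Prop
  | base {a b : L.Term ℕ} : Fm.equal a b ∈ E → TermCong E a b
  | refl (a : L.Term ℕ) : TermCong E a a
  | symm {a b : L.Term ℕ} : TermCong E a b → TermCong E b a
  | trans {a b c : L.Term ℕ} : TermCong E a b → TermCong E b c → TermCong E a c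
  | congr {x y c : L.Term ℕ} {w : ℕ} : TermCong E x y → tCount w c = 1 →
      TermCong E (c.subst (update Term.var w x)) (c.subst (update Term.var w y))

def EqnsSub (E G : Multiset (Fm L)) : Prop :=
  ∀ a b : L.Term ℕ, Fm.equal a b ∈ E → Fm.equal a b ∈ G

namespace TermCong

variable {E : Multiset (Fm L)}

theorem mono {E' : Multiset (Fm L)} (hE : EqnsSub E E') {a b : L.Term ℕ}
    (h : TermCong E a b) : TermCong E' a b := by
  induction h with
  | base h => exact base (hE _ _ h)
  | refl a => exact refl a
  | symm _ ih => exact ih.symm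
  | trans _ _ ih₁ ih₂ => exact ih₁.trans ih₂
  | congr _ hc ih => exact ih.congr hc

theorem func {l : ℕ} (f : L.Functions l) {xs ys : Fin l → L.Term ℕ}
    (h : ∀ i, TermCong E (xs i) (ys i)) : TermCong E (Term.func f xs) (Term.func f ys) := by
  refine rel_of_update_steps (r := fun xs ys => TermCong E (Term.func f xs) (Term.func f ys))
    (fun _ => refl _) trans fun x i hx => ?_
  obtain ⟨w, hw⟩ := (eventually_all.2 fun j => tCount_eventually_eq_zero (x j)).exists
  have := (hx ▸ h i).congr (c := Term.func f (update x i (Term.var w)))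
    (sum_tCount_update_var hw i)
  simpa [Term.subst, subst_update_var_vector hw] using this

theorem subst (t : L.Term ℕ) {σ τ : ℕ → L.Term ℕ} (h : ∀ z, TermCong E (σ z) (τ z)) :
    TermCong E (t.subst σ) (t.subst τ) := by
  induction t with
  | var z => exact h z
  | func f ts ih => exact func f ih

end TermCong

inductive AtomCong (E : Multiset (Fm L)) : Fm L → Fm L → Prop
  | equal {t₁ t₂ t₁' t₂' : L.Term ℕ} : TermCong E t₁ t₁' → TermCong E t₂ t₂' →
      AtomCong E (.equal t₁ t₂) (.equal t₁' t₂')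
  | rel {l : ℕ} (R : L.Relations l) {ts ts' : Fin l → L.Term ℕ} :
      (∀ i, TermCong E (ts i) (ts' i)) → AtomCong E (.rel R ts) (.rel R ts')

namespace AtomCong

variable {E : Multiset (Fm L)} {X Y Z : Fm L}

theorem isAtomic_left (h : AtomCong E X Y) : X.IsAtomic := by
  cases h
  exacts [.equal _ _, .rel _ _]

theorem isAtomic_right (h : AtomCong E X Y) : Y.IsAtomic := by
  cases h
  exacts [.equal _ _, .rel _ _]

theorem refl (hX : X.IsAtomic) : AtomCong E X X := by
  cases hX
  exacts [equal (.refl _) (.refl _), rel _ fun _ => .refl _]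

theorem trans (h : AtomCong E X Y) (h' : AtomCong E Y Z) : AtomCong E X Z := by
  cases h with
  | equal h₁ h₂ =>
      cases h' with
      | equal h₁' h₂' => exact equal (h₁.trans h₁') (h₂.trans h₂')
  | rel R h =>
      cases h' with
      | rel _ h' => exact rel R fun i => (h i).trans (h' i)

theorem mono {E' : Multiset (Fm L)} (hE : EqnsSub E E') (h : AtomCong E X Y) :
    AtomCong E' X Y := by
  cases h with
  | equal h₁ h₂ => exact equal (h₁.mono hE) (h₂.mono hE)
  | rel R h => exact rel R fun i => (h i).mono hE

theorem ssub {A : Fm L} (hA : A.IsAtomic) {σ τ : ℕ → L.Term ℕ}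
    (h : ∀ z, TermCong E (σ z) (τ z)) : AtomCong E (A.ssub σ) (A.ssub τ) := by
  cases hA with
  | equal t₁ t₂ => exact equal (TermCong.subst t₁ h) (TermCong.subst t₂ h)
  | rel R ts => exact rel R fun i => TermCong.subst (ts i) h

theorem subst {P : Fm L} (hP : P.IsAtomic) (w : ℕ) {s r : L.Term ℕ} (h : TermCong E s r) :
    AtomCong E (P.subst w s) (P.subst w r) :=
  ssub hP fun z => by
    rcases eq_or_ne z w with rfl | hz
    · simpa using h
    · simpa [hz] using TermCong.refl _

end AtomCong

theorem DerC.succ {rp : Multiset (Fm L) → Multiset (Fm L) → Prop} {n : ℕ}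
    {Γ Δ : Multiset (Fm L)} (h : DerC rp n Γ Δ) : DerC rp (n + 1) Γ Δ := by
  induction h with
  | ax hP => exact .ax hP
  | botL => exact .botL
  | andL _ ih => exact .andL ih
  | andR _ _ ih₁ ih₂ => exact .andR ih₁ ih₂
  | orL _ _ ih₁ ih₂ => exact .orL ih₁ ih₂
  | orR _ ih => exact .orR ih
  | impL _ _ ih₁ ih₂ => exact .impL ih₁ ih₂
  | impR _ ih => exact .impR ih
  | allL hf _ ih => exact .allL hf ih
  | allR hf hy hΓ hΔ _ ih => exact .allR hf hy hΓ hΔ ih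
  | exL hf hy hΓ hΔ _ ih => exact .exL hf hy hΓ hΔ ih
  | exR hf _ ih => exact .exR hf ih
  | ref t _ ih => exact .ref t ih
  | repl hr _ ih => exact .repl hr ih

theorem DerC.mono {rp : Multiset (Fm L) → Multiset (Fm L) → Prop} {n n' : ℕ}
    {Γ Δ : Multiset (Fm L)} (h : DerC rp n Γ Δ) (hn : n ≤ n') : DerC rp n' Γ Δ := by
  induction hn with
  | refl => exact h
  | step _ ih => exact ih.succ

def Derivable (Γ Δ : Multiset (Fm L)) : Prop :=
  ∃ k, DerC (ReplMinus1 L) k Γ Δ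

namespace Derivable

variable {Γ Δ : Multiset (Fm L)}

theorem exists_height₂ {Γ' Δ' : Multiset (Fm L)} (h : Derivable Γ Δ) (h' : Derivable Γ' Δ') :
    ∃ k, DerC (ReplMinus1 L) k Γ Δ ∧ DerC (ReplMinus1 L) k Γ' Δ' := by
  obtain ⟨k, d⟩ := h
  obtain ⟨k', d'⟩ := h'
  exact ⟨max k k', d.mono (le_max_left _ _), d'.mono (le_max_right _ _)⟩

theorem ref (t : L.Term ℕ) (h : Derivable (Fm.equal t t ::ₘ Γ) Δ) : Derivable Γ Δ := by
  obtain ⟨k, d⟩ := h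
  exact ⟨k + 1, .ref t d⟩

/-- Repl₁⁻ without the proviso on the marker `w`, which is renamed apart from `s` and `r`. -/
theorem replace {s r : L.Term ℕ} {w : ℕ} {P : Fm L} (hP : P.IsAtomic) (hw : Fm.fCount w P = 1)
    (h : Derivable (Fm.equal s r ::ₘ P.subst w r ::ₘ Γ) Δ) :
    Derivable (Fm.equal s r ::ₘ P.subst w s ::ₘ Γ) Δ := by
  obtain ⟨k, d⟩ := h
  obtain ⟨Q, w', ⟨hs, hr⟩, hQ, hQw, hQsub⟩ := hP.exists_marker_subst hw (tCount_var_self w)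
    ((tCount_eventually_eq_zero s).and (tCount_eventually_eq_zero r))
  simp only [Term.subst, update_self] at hQsub
  rw [← hQsub] at d ⊢
  exact ⟨k + 1, .repl ⟨s, r, w', Q, Γ, hQ, hs, hr, hQw, rfl, rfl⟩ d⟩

theorem contract_equal {a b : L.Term ℕ} (hmem : Fm.equal a b ∈ Γ)
    (h : Derivable (Fm.equal a b ::ₘ Γ) Δ) : Derivable Γ Δ := by
  obtain ⟨Γ₀, rfl⟩ := exists_cons_of_mem hmem
  obtain ⟨w, hw, hsub⟩ := Fm.exists_marker_equal_right a
  refine ref a ?_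
  rw [cons_swap, ← hsub a]
  refine replace (.equal _ _) hw ?_
  rwa [hsub]

end Derivable

/-- Quantifying over every context that contains the equations of `E` stands in for weakening,
which is not a rule of the calculus. -/
def Replaceable (E Δ : Multiset (Fm L)) (X Y : Fm L) : Prop :=
  (∀ G, EqnsSub E G → Derivable (Y ::ₘ G) Δ) → ∀ G, EqnsSub E G → Derivable (X ::ₘ G) Δ

namespace Replaceable

variable {E Δ : Multiset (Fm L)} {X Y Z : Fm L}

protected theorem rfl : Replaceable E Δ X X := fun h => h

theorem trans (h : Replaceable E Δ X Y) (h' : Replaceable E Δ Y Z) : Replaceable E Δ X Z :=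
  fun hZ => h (h' hZ)

variable {a b : L.Term ℕ} {P : Fm L} {w : ℕ}

theorem of_mem (hab : Fm.equal a b ∈ E) (hP : P.IsAtomic) (hw : Fm.fCount w P = 1) :
    Replaceable E Δ (P.subst w a) (P.subst w b) := by
  intro H G hG
  obtain ⟨G₀, hG₀⟩ := exists_cons_of_mem (hG a b hab)
  rw [hG₀, cons_swap]
  refine Derivable.replace hP hw ?_
  rw [cons_swap, ← hG₀]
  exact H G hG

theorem of_mem_symm (hab : Fm.equal a b ∈ E) (hP : P.IsAtomic) (hw : Fm.fCount w P = 1) :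
    Replaceable E Δ (P.subst w b) (P.subst w a) := by
  intro H G hG
  obtain ⟨G₀, hG₀⟩ := exists_cons_of_mem (hG a b hab)
  obtain ⟨w', hw', hsub⟩ := Fm.exists_marker_equal_left a
  -- `a = a` by Ref, rewritten to `b = a` with `a = b`, which then carries `P[b]` to `P[a]`
  refine Derivable.ref a ?_
  rw [hG₀, cons_swap _ (Fm.equal a b), cons_swap _ (Fm.equal a b), ← hsub a]
  refine Derivable.replace (.equal _ _) hw' ?_
  rw [hsub b, cons_swap (Fm.equal a b), cons_swap (Fm.equal a b)]
  refine Derivable.replace hP hw ?_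
  rw [cons_swap, ← hG₀]
  exact H _ fun x y hxy => mem_cons_of_mem (hG x y hxy)

end Replaceable

theorem TermCong.replaceable {E Δ : Multiset (Fm L)} {a b : L.Term ℕ} (h : TermCong E a b)
    {P : Fm L} {w : ℕ} (hP : P.IsAtomic) (hw : Fm.fCount w P = 1) :
    Replaceable E Δ (P.subst w a) (P.subst w b) ∧ Replaceable E Δ (P.subst w b) (P.subst w a) := by
  induction h generalizing P w with
  | base hab => exact ⟨.of_mem hab hP hw, .of_mem_symm hab hP hw⟩
  | refl => exact ⟨.rfl, .rfl⟩
  | symm _ ih => exact (ih hP hw).symm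
  | trans _ _ ih₁ ih₂ =>
      exact ⟨(ih₁ hP hw).1.trans (ih₂ hP hw).1, (ih₂ hP hw).2.trans (ih₁ hP hw).2⟩
  | congr _ hc ih =>
      obtain ⟨Q, w', -, hQ, hQw, hQsub⟩ := hP.exists_marker_subst hw hc (p := fun _ => True)
        (Eventually.of_forall fun _ => trivial)
      simpa only [hQsub] using ih hQ hQw

theorem AtomCong.replaceable {E Δ : Multiset (Fm L)} {X Y : Fm L} (h : AtomCong E X Y) :
    Replaceable E Δ X Y := by
  cases h with
  | @equal t₁ t₂ t₁' t₂' h₁ h₂ =>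
      obtain ⟨w₁, hw₁, hsub₁⟩ := Fm.exists_marker_equal_left t₂
      obtain ⟨w₂, hw₂, hsub₂⟩ := Fm.exists_marker_equal_right t₁'
      have step₁ := (h₁.replaceable (Δ := Δ) (.equal _ _) hw₁).1
      have step₂ := (h₂.replaceable (Δ := Δ) (.equal _ _) hw₂).1
      rw [hsub₁, hsub₁] at step₁
      rw [hsub₂, hsub₂] at step₂
      exact step₁.trans step₂
  | rel R h =>
      refine rel_of_update_steps (r := fun xs ys => Replaceable E Δ (.rel R xs) (.rel R ys))
        (fun _ => .rfl) .trans fun x i hx => ?_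
      obtain ⟨w, hw⟩ := (eventually_all.2 fun j => tCount_eventually_eq_zero (x j)).exists
      have := ((hx ▸ h i).replaceable (Δ := Δ) (.rel R (update x i (Term.var w)))
        (sum_tCount_update_var hw i)).1
      simpa [subst_update_var_vector hw] using this

def AtomsSub (Θ Θ' : Multiset (Fm L)) : Prop :=
  ∀ B ∈ Θ, B.IsAtomic → B ∈ Θ'

theorem AtomsSub.eqnsSub {Θ Θ' : Multiset (Fm L)} (h : AtomsSub Θ Θ') : EqnsSub Θ Θ' :=
  fun _ _ hm => h _ hm (.equal _ _)

theorem atomsSub_cons (C : Fm L) (Θ : Multiset (Fm L)) : AtomsSub Θ (C ::ₘ Θ) :=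
  fun _ hm _ => mem_cons_of_mem hm

theorem atomsSub_cons_of_not_isAtomic {D : Fm L} (hD : ¬D.IsAtomic) (Θ : Multiset (Fm L)) :
    AtomsSub (D ::ₘ Θ) Θ := by
  intro B hB hat
  rcases mem_cons.mp hB with rfl | hB
  exacts [absurd hat hD, hB]

def atomVars (Λ : Multiset (Fm L)) : Set ℕ :=
  {y | ∃ B ∈ Λ, B.IsAtomic ∧ y ∈ B.freeVars}

theorem atomVars_mono {Λ Λ' : Multiset (Fm L)} (h : AtomsSub Λ Λ') : atomVars Λ ⊆ atomVars Λ' :=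
  fun _ ⟨B, hB, hat, hy⟩ => ⟨B, h B hB hat, hat, hy⟩

theorem freeVars_subset_atomVars {Λ : Multiset (Fm L)} {B : Fm L} (hB : B ∈ Λ)
    (hat : B.IsAtomic) : B.freeVars ⊆ atomVars Λ :=
  fun _ hy => ⟨B, hB, hat, hy⟩

/-- When `X ≠ X'`, the variables of `X` are kept in atoms of `Λ`. Only Repl⁻ removes an atom, and
the variables it loses survive in its equation, so eigenvariable conditions checked on `Λ`
also hold for `Θ`. -/
def Corresponds (Θ Λ : Multiset (Fm L)) (X X' : Fm L) : Prop :=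
  X = X' ∨ AtomCong Θ X X' ∧ X.freeVars ⊆ atomVars Λ

def Entailed (Θ : Multiset (Fm L)) (X : Fm L) : Prop :=
  (∃ a b, X = Fm.equal a b ∧ TermCong Θ a b) ∨ ∃ B ∈ Θ, AtomCong Θ B X

def Simulates (Θ Λ : Multiset (Fm L)) : Prop :=
  ∃ Λ₁ Ξ, Λ = Λ₁ + Ξ ∧ Multiset.Rel (Corresponds Θ Λ) Θ Λ₁ ∧ ∀ X ∈ Ξ, Entailed Θ X

theorem Corresponds.mono {Θ₁ Θ₂ Λ₁ Λ₂ : Multiset (Fm L)} (hΘ : EqnsSub Θ₁ Θ₂)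
    (hΛ : atomVars Λ₁ ⊆ atomVars Λ₂) {X X' : Fm L} (h : Corresponds Θ₁ Λ₁ X X') :
    Corresponds Θ₂ Λ₂ X X' :=
  h.imp_right fun ⟨hc, hv⟩ => ⟨hc.mono hΘ, hv.trans hΛ⟩

namespace Entailed

variable {Θ : Multiset (Fm L)} {X Y : Fm L}

theorem isAtomic (h : Entailed Θ X) : X.IsAtomic := by
  rcases h with ⟨a, b, rfl, -⟩ | ⟨B, -, hB⟩
  exacts [.equal _ _, hB.isAtomic_right]

theorem mono {Θ' : Multiset (Fm L)} (hΘ : AtomsSub Θ Θ') (h : Entailed Θ X) : Entailed Θ' X := by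
  rcases h with ⟨a, b, rfl, hab⟩ | ⟨B, hB, hBX⟩
  · exact .inl ⟨a, b, rfl, hab.mono hΘ.eqnsSub⟩
  · exact .inr ⟨B, hΘ B hB hBX.isAtomic_left, hBX.mono hΘ.eqnsSub⟩

theorem of_atomCong (h : Entailed Θ X) (hXY : AtomCong Θ X Y) : Entailed Θ Y := by
  rcases h with ⟨a, b, rfl, hab⟩ | ⟨B, hB, hBX⟩
  · cases hXY with
    | equal h₁ h₂ => exact .inl ⟨_, _, rfl, (h₁.symm.trans hab).trans h₂⟩
  · exact .inr ⟨B, hB, hBX.trans hXY⟩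

theorem termCong {a b : L.Term ℕ} (h : Entailed Θ (Fm.equal a b)) : TermCong Θ a b := by
  rcases h with ⟨a', b', he, hab⟩ | ⟨B, hB, hBX⟩
  · cases he
    exact hab
  · cases hBX with
    | equal h₁ h₂ => exact (h₁.symm.trans (.base hB)).trans h₂

theorem derivable (h : Entailed Θ X) (Δ : Multiset (Fm L)) : Derivable Θ (X ::ₘ Δ) := by
  have hax : ∀ G, EqnsSub Θ G → Derivable (X ::ₘ G) (X ::ₘ Δ) :=
    fun _ _ => ⟨0, .ax h.isAtomic⟩
  rcases h with ⟨a, b, rfl, hab⟩ | ⟨B, hB, hBX⟩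
  · exact .ref a ((AtomCong.equal (.refl a) hab).replaceable hax Θ fun _ _ => id)
  · obtain ⟨Θ₀, rfl⟩ := exists_cons_of_mem hB
    -- an equation `B` must stay in the context while it is itself rewritten
    by_cases hBeq : ∃ a b, B = Fm.equal a b
    · obtain ⟨a, b, rfl⟩ := hBeq
      exact .contract_equal hB (hBX.replaceable hax _ fun _ _ => id)
    · refine hBX.replaceable hax Θ₀ fun a b hm => ?_
      rcases mem_cons.mp hm with he | hm
      exacts [absurd ⟨a, b, he.symm⟩ hBeq, hm]

end Entailed

namespace Simulates

variable {Θ Λ : Multiset (Fm L)}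

protected theorem refl (Θ : Multiset (Fm L)) : Simulates Θ Θ :=
  ⟨Θ, 0, (add_zero Θ).symm, rel_refl_of_refl_on fun _ _ => .inl rfl, by simp⟩

theorem entailed (h : Simulates Θ Λ) {X : Fm L} (hX : X ∈ Λ) (hat : X.IsAtomic) :
    Entailed Θ X := by
  obtain ⟨Λ₁, Ξ, rfl, hRel, hΞ⟩ := h
  rcases mem_add.mp hX with hX | hX
  · obtain ⟨B, hB, hBX⟩ := exists_mem_of_rel_of_mem (rel_flip.2 hRel) hX
    rcases hBX with rfl | ⟨hBX, -⟩
    exacts [.inr ⟨B, hB, .refl hat⟩, .inr ⟨B, hB, hBX⟩]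
  · exact hΞ X hX

theorem cons (h : Simulates Θ Λ) (C : Fm L) : Simulates (C ::ₘ Θ) (C ::ₘ Λ) := by
  obtain ⟨Λ₁, Ξ, rfl, hRel, hΞ⟩ := h
  refine ⟨C ::ₘ Λ₁, Ξ, (cons_add _ _ _).symm, .cons (.inl rfl) (hRel.mono fun _ _ _ _ hc => ?_),
    fun X hX => (hΞ X hX).mono (atomsSub_cons C Θ)⟩
  exact hc.mono (atomsSub_cons C Θ).eqnsSub (atomVars_mono (atomsSub_cons C _))

theorem cons_entailed (h : Simulates Θ Λ) {C : Fm L} (hC : Entailed Θ C) :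
    Simulates Θ (C ::ₘ Λ) := by
  obtain ⟨Λ₁, Ξ, rfl, hRel, hΞ⟩ := h
  refine ⟨Λ₁, C ::ₘ Ξ, (add_cons _ _ _).symm, hRel.mono fun _ _ _ _ hc => ?_,
    forall_mem_cons.2 ⟨hC, hΞ⟩⟩
  exact hc.mono (fun _ _ => id) (atomVars_mono (atomsSub_cons C _))

theorem of_cons_nonatomic {D : Fm L} (hD : ¬D.IsAtomic) (h : Simulates Θ (D ::ₘ Λ)) :
    ∃ Θ₀, Θ = D ::ₘ Θ₀ ∧ Simulates Θ₀ Λ := by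
  obtain ⟨Λ₁, Ξ, hΛ, hRel, hΞ⟩ := h
  rcases cons_eq_add_cases hΛ with ⟨Λ₀, rfl, rfl⟩ | ⟨Ξ₀, rfl, -⟩
  · obtain ⟨X, Θ₀, hXD, hRel₀, rfl⟩ := rel_cons_right.mp hRel
    obtain rfl : X = D := hXD.resolve_right fun hc => hD hc.1.isAtomic_right
    have hsub := atomsSub_cons_of_not_isAtomic hD Θ₀
    refine ⟨Θ₀, rfl, Λ₀, Ξ, rfl, hRel₀.mono fun _ _ _ _ hc => ?_,
      fun X hX => (hΞ X hX).mono hsub⟩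
    exact hc.mono hsub.eqnsSub (atomVars_mono (atomsSub_cons_of_not_isAtomic hD _))
  · exact absurd (hΞ D (mem_cons_self _ _)).isAtomic hD

theorem fresh (h : Simulates Θ Λ) {y : ℕ} (hy : ∀ C ∈ Λ, y ∉ C.freeVars) :
    ∀ C ∈ Θ, y ∉ C.freeVars := by
  obtain ⟨Λ₁, Ξ, rfl, hRel, -⟩ := h
  intro C hC hyC
  obtain ⟨C', hC', hCC'⟩ := exists_mem_of_rel_of_mem hRel hC
  rcases hCC' with rfl | ⟨-, hv⟩
  · exact hy C (mem_add.2 (.inl hC')) hyC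
  · obtain ⟨B, hB, -, hyB⟩ := hv hyC
    exact hy B hB hyB

theorem replace {F F' : Fm L} {Λ₀ : Multiset (Fm L)} (h : Simulates Θ (F ::ₘ Λ₀))
    (hFF' : AtomCong Θ F F') (hv : atomVars (F ::ₘ Λ₀) ⊆ atomVars (F' ::ₘ Λ₀)) :
    Simulates Θ (F' ::ₘ Λ₀) := by
  obtain ⟨Λ₁, Ξ, hΛ, hRel, hΞ⟩ := h
  have hRel' := hRel.mono fun _ _ _ _ (hc : Corresponds _ _ _ _) => hc.mono (fun _ _ => id) hv
  rcases cons_eq_add_cases hΛ with ⟨Λ₀', rfl, rfl⟩ | ⟨Ξ₀, rfl, rfl⟩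
  · obtain ⟨X, Θ₀, hXF, hRel₀, rfl⟩ := rel_cons_right.mp hRel'
    refine ⟨F' ::ₘ Λ₀', Ξ, (cons_add _ _ _).symm, .cons (.inr ?_) hRel₀, hΞ⟩
    rcases hXF with rfl | ⟨hXF, hXv⟩
    · exact ⟨hFF', (freeVars_subset_atomVars (mem_cons_self _ _) hFF'.isAtomic_left).trans hv⟩
    · exact ⟨hXF.trans hFF', hXv⟩
  · refine ⟨Λ₁, F' ::ₘ Ξ₀, (add_cons _ _ _).symm, hRel', forall_mem_cons.2 ⟨?_, ?_⟩⟩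
    · exact (hΞ F (mem_cons_self _ _)).of_atomCong hFF'
    · exact fun X hX => hΞ X (mem_cons_of_mem hX)

theorem of_replMinus {Γp Γc : Multiset (Fm L)} (hrp : ReplMinus L Γp Γc)
    (h : Simulates Θ Γc) : Simulates Θ Γp := by
  obtain ⟨s, r, w, P, Γ₀, hP, -, -, rfl, rfl⟩ := hrp
  have hsr := (h.entailed (mem_cons_self _ _) (.equal _ _)).termCong
  rw [cons_swap] at h ⊢
  refine h.replace (.subst hP w hsr) ?_
  rintro y ⟨B, hB, hat, hy⟩
  rcases mem_cons.mp hB with rfl | hB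
  · rcases hP.mem_freeVars_subst r hy with hy | hy
    · exact ⟨_, mem_cons_self _ _, hP.subst w r, hy⟩
    · exact ⟨_, mem_cons_of_mem (mem_cons_self _ _), .equal _ _, hy⟩
  · exact ⟨B, mem_cons_of_mem hB, hat, hy⟩

end Simulates

theorem DerC.derivable_of_simulates {n : ℕ} {Λ Δ : Multiset (Fm L)}
    (h : DerC (ReplMinus1 L) n Λ Δ) {Θ : Multiset (Fm L)} (hΘ : Simulates Θ Λ) :
    Derivable Θ Δ := by
  induction h generalizing Θ with
  | ax hP => exact (hΘ.entailed (mem_cons_self _ _) hP).derivable _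
  | botL =>
      obtain ⟨Θ₀, rfl, -⟩ := hΘ.of_cons_nonatomic (by rintro ⟨⟩)
      exact ⟨0, .botL⟩
  | andL _ ih =>
      obtain ⟨Θ₀, rfl, h₀⟩ := hΘ.of_cons_nonatomic (by rintro ⟨⟩)
      obtain ⟨k, d⟩ := ih ((h₀.cons _).cons _)
      exact ⟨k + 1, .andL d⟩
  | andR _ _ ih₁ ih₂ =>
      obtain ⟨k, d₁, d₂⟩ := (ih₁ hΘ).exists_height₂ (ih₂ hΘ)
      exact ⟨k + 1, .andR d₁ d₂⟩
  | orL _ _ ih₁ ih₂ =>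
      obtain ⟨Θ₀, rfl, h₀⟩ := hΘ.of_cons_nonatomic (by rintro ⟨⟩)
      obtain ⟨k, d₁, d₂⟩ := (ih₁ (h₀.cons _)).exists_height₂ (ih₂ (h₀.cons _))
      exact ⟨k + 1, .orL d₁ d₂⟩
  | orR _ ih =>
      obtain ⟨k, d⟩ := ih hΘ
      exact ⟨k + 1, .orR d⟩
  | impL _ _ ih₁ ih₂ =>
      obtain ⟨Θ₀, rfl, h₀⟩ := hΘ.of_cons_nonatomic (by rintro ⟨⟩)
      obtain ⟨k, d₁, d₂⟩ := (ih₁ h₀).exists_height₂ (ih₂ (h₀.cons _))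
      exact ⟨k + 1, .impL d₁ d₂⟩
  | impR _ ih =>
      obtain ⟨k, d⟩ := ih (hΘ.cons _)
      exact ⟨k + 1, .impR d⟩
  | allL hf _ ih =>
      obtain ⟨Θ₀, rfl, -⟩ := hΘ.of_cons_nonatomic (by rintro ⟨⟩)
      obtain ⟨k, d⟩ := ih (hΘ.cons _)
      exact ⟨k + 1, .allL hf d⟩
  | allR hf hy hΓ hΔ _ ih =>
      obtain ⟨k, d⟩ := ih hΘ
      exact ⟨k + 1, .allR hf hy (hΘ.fresh hΓ) hΔ d⟩
  | exL hf hy hΓ hΔ _ ih =>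
      have hfresh := hΘ.fresh (forall_mem_cons.2 ⟨hy, hΓ⟩)
      obtain ⟨Θ₀, rfl, h₀⟩ := hΘ.of_cons_nonatomic (by rintro ⟨⟩)
      obtain ⟨k, d⟩ := ih (h₀.cons _)
      exact ⟨k + 1, .exL hf hy (fun C hC => hfresh C (mem_cons_of_mem hC)) hΔ d⟩
  | exR hf _ ih =>
      obtain ⟨k, d⟩ := ih hΘ
      exact ⟨k + 1, .exR hf d⟩
  | ref t _ ih => exact ih (hΘ.cons_entailed (.inl ⟨t, t, rfl, .refl t⟩))
  | repl hrp _ ih =>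
      obtain ⟨s, r, w, P, Γ, hP, hs, hr, -, hp, hc⟩ := hrp
      exact ih (hΘ.of_replMinus ⟨s, r, w, P, Γ, hP, hs, hr, hp, hc⟩)

theorem generalized_repl_admissible_G3c1EqMinus_general (L : FirstOrder.Language.{u, v})
    (m : ℕ) (A : Fm L) (hA : A.IsAtomic)
    (uu : Fin m → ℕ) (v : ℕ)
    (q p : Fin m → L.Term ℕ) (s r : L.Term ℕ)
    (σ τ : ℕ → L.Term ℕ)
    (hσv : σ v = s) (hσu : ∀ i, σ (uu i) = q i)
    (hσ : ∀ w, w ≠ v → (∀ i, w ≠ uu i) → σ w = Term.var w)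
    (hτv : τ v = r) (hτu : ∀ i, τ (uu i) = p i)
    (hτ : ∀ w, w ≠ v → (∀ i, w ≠ uu i) → τ w = Term.var w)
    (Γ Δ : Multiset (Fm L))
    (hd : ∃ k, DerC (ReplMinus1 L) k
      (((Finset.univ : Finset (Fin m)).val.map fun i => Fm.equal (q i) (p i)) +
        (Fm.equal s r ::ₘ A.ssub σ ::ₘ A.ssub τ ::ₘ Γ)) Δ) :
    ∃ k, DerC (ReplMinus1 L) k
      (((Finset.univ : Finset (Fin m)).val.map fun i => Fm.equal (q i) (p i)) +
        (Fm.equal s r ::ₘ A.ssub σ ::ₘ Γ)) Δ := by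
  obtain ⟨k, d⟩ := hd
  set Θ := ((Finset.univ : Finset (Fin m)).val.map fun i => Fm.equal (q i) (p i)) +
    (Fm.equal s r ::ₘ A.ssub σ ::ₘ Γ)
  have hcong : ∀ z, TermCong Θ (σ z) (τ z) := by
    intro z
    by_cases hzv : z = v
    · subst hzv
      exact hσv ▸ hτv ▸ .base (by simp [Θ])
    by_cases hzu : ∃ i, z = uu i
    · obtain ⟨i, rfl⟩ := hzu
      exact hσu i ▸ hτu i ▸ .base (mem_add.2 (.inl (mem_map_of_mem _ (Finset.mem_univ i))))
    · push Not at hzu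
      exact hσ z hzv hzu ▸ hτ z hzv hzu ▸ .refl _
  have hsim : Simulates Θ (A.ssub τ ::ₘ Θ) :=
    (Simulates.refl Θ).cons_entailed (.inr ⟨A.ssub σ, by simp [Θ], .ssub hA hcong⟩)
  refine d.derivable_of_simulates ?_
  simpa only [Θ, add_cons, cons_swap (A.ssub τ)] using hsim

/-- Generalized admissibility of multiple simultaneous replacement in `G3c₁^=⁻`:
if `A` is atomic, the variables `u₁, …, uₙ, v` are pairwise distinct, each occurs
exactly once in `A` and none of them occurs in the terms `q₁, …, qₙ, p₁, …, pₙ, s, r`,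
and `q₁ = p₁, …, qₙ = pₙ, s = r, A[u⃗/q⃗, v/s], A[u⃗/p⃗, v/r], Γ ⇒ Δ` is derivable, then
`q₁ = p₁, …, qₙ = pₙ, s = r, A[u⃗/q⃗, v/s], Γ ⇒ Δ` is derivable.  Here the simultaneous
substitutions `[u⃗/q⃗, v/s]` and `[u⃗/p⃗, v/r]` are represented by maps `σ`, `τ` that send
`uᵢ` to `qᵢ` (resp. `pᵢ`), `v` to `s` (resp. `r`), and every other variable to itself. -/
theorem generalized_repl_admissible_G3c1EqMinus (L : FirstOrder.Language.{u, v})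
    (m : ℕ) (A : Fm L) (hA : A.IsAtomic)
    (uu : Fin m → ℕ) (v : ℕ) (huinj : Function.Injective uu) (huv : ∀ i, uu i ≠ v)
    (hu1 : ∀ i, Fm.fCount (uu i) A = 1) (hv1 : Fm.fCount v A = 1)
    (q p : Fin m → L.Term ℕ) (s r : L.Term ℕ)
    (hu_occ : ∀ i, (∀ j, tCount (uu i) (q j) = 0 ∧ tCount (uu i) (p j) = 0) ∧
      tCount (uu i) s = 0 ∧ tCount (uu i) r = 0)
    (hv_occ : (∀ j, tCount v (q j) = 0 ∧ tCount v (p j) = 0) ∧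
      tCount v s = 0 ∧ tCount v r = 0)
    (σ τ : ℕ → L.Term ℕ)
    (hσv : σ v = s) (hσu : ∀ i, σ (uu i) = q i)
    (hσ : ∀ w, w ≠ v → (∀ i, w ≠ uu i) → σ w = Term.var w)
    (hτv : τ v = r) (hτu : ∀ i, τ (uu i) = p i)
    (hτ : ∀ w, w ≠ v → (∀ i, w ≠ uu i) → τ w = Term.var w)
    (Γ Δ : Multiset (Fm L))
    (hd : ∃ k, DerC (ReplMinus1 L) k
      (((Finset.univ : Finset (Fin m)).val.map fun i => Fm.equal (q i) (p i)) +
        (Fm.equal s r ::ₘ A.ssub σ ::ₘ A.ssub τ ::ₘ Γ)) Δ) :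
    ∃ k, DerC (ReplMinus1 L) k
      (((Finset.univ : Finset (Fin m)).val.map fun i => Fm.equal (q i) (p i)) +
        (Fm.equal s r ::ₘ A.ssub σ ::ₘ Γ)) Δ :=
  generalized_repl_admissible_G3c1EqMinus_general L m A hA uu v q p s r σ τ hσv hσu hσ hτv hτu hτ Γ
    Δ hd
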